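/- Fix a TSO run r, a finite set S of nodes of r, and Δ ≥ 0. For an agent b, let m̂_b be 0 if ⟨b,0⟩ ∉ Past⁺_r(S), and otherwise the time t > 0 with ⟨b,t−1⟩ ∈ Past⁺_r(S) and ⟨b,t⟩ ∉ Past⁺_r(S); and let shift_Δ(t,k) = t if t ≤ k and t + Δ if t ≥ k + 1. Then for all nodes θ₁ = ⟨b₁,t₁⟩ and θ₂ = ⟨b₂,t₂⟩ of r, if θ₁ ob⇝_r θ₂ then shift_Δ(t₁+1, m̂_{b₁}) < shift_Δ(t₂+1, m̂_{b₂}). -/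

import Mathlib

namespace TSO

/-- Agents: the processes `proc i` together with a local dispatcher `disp i`
for each process, in charge of propagating the store buffer. -/
inductive Agent (n : ℕ) where
  | proc : Fin n → Agent n
  | disp : Fin n → Agent n
deriving DecidableEq

/-- A tag `⟨i,k⟩` identifies the k-th write of process `i`. -/
abbrev Tag (n : ℕ) := Fin n × ℕ

/-- A node is an agent together with a time. -/
abbrev Node (n : ℕ) := Agent n × ℕ

/-- The possible events occurring at a node of a TSO run:
writes (to the store buffer), reads-from-buffer, reads-from-memory,
fences, read-modify-writes, propagations from a store buffer to memory,
returns of operations (with a response), and the null event. -/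
inductive Event (n : ℕ) (Var Val Op Resp : Type) where
  | write (x : Var) (v : Val) (tag : Tag n)
  | rfb   (x : Var) (v : Val) (tag : Tag n)
  | rfm   (x : Var) (v : Val) (tag : Option (Tag n))
  | fence
  | rmw   (x : Var) (vexp vnew : Val)
  | prop  (x : Var) (v : Val) (tag : Tag n)
  | ret   (o : Op) (res : Resp)
  | nul

namespace Event

variable {n : ℕ} {Var Val Op Resp : Type}

def isW : Event n Var Val Op Resp → Prop
  | write _ _ _ => True
  | _ => False

def isRfB : Event n Var Val Op Resp → Prop
  | rfb _ _ _ => True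
  | _ => False

def isRfM : Event n Var Val Op Resp → Prop
  | rfm _ _ _ => True
  | _ => False

def isRMW : Event n Var Val Op Resp → Prop
  | rmw _ _ _ => True
  | _ => False

def isProp : Event n Var Val Op Resp → Prop
  | prop _ _ _ => True
  | _ => False

/-- The variable accessed in memory by the event, if it is a memory access:
RMWs, propagations, and reads-from-memory are the memory accesses. -/
def memVar : Event n Var Val Op Resp → Option Var
  | rfm x _ _ => some x
  | rmw x _ _ => some x
  | prop x _ _ => some x
  | _ => none

/-- The tag of a write or read-from-buffer event. -/
def wtag : Event n Var Val Op Resp → Option (Tag n)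
  | write _ _ κ => some κ
  | rfb _ _ κ => some κ
  | _ => none

end Event

/-- Two events (at the given agents) conflict if both are memory accesses of the
same variable, at least one of them is not an RfM, and it is not the case that
one of them is a prop at `disp i` and the other an RfM at `proc i`. -/
def EvConflict {n : ℕ} {Var Val Op Resp : Type} (a : Agent n) (e : Event n Var Val Op Resp)
    (a' : Agent n) (e' : Event n Var Val Op Resp) : Prop :=
  (∃ x, e.memVar = some x ∧ e'.memVar = some x) ∧
  ¬(e.isRfM ∧ e'.isRfM) ∧
  ¬(∃ i : Fin n, (a = .disp i ∧ a' = .proc i ∧ e.isProp ∧ e'.isRfM) ∨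
                 (a' = .disp i ∧ a = .proc i ∧ e'.isProp ∧ e.isRfM))

/-- The base cases of the occurs-before relation, for an assignment `E` of an
event to every node. -/
inductive ObBase {n : ℕ} {Var Val Op Resp : Type}
    (E : Agent n → ℕ → Event n Var Val Op Resp) : Node n → Node n → Prop where
  | locality (b : Agent n) (t t' : ℕ) :
      t < t' → ObBase E (b, t) (b, t')
  | buffer (i : Fin n) (t t' : ℕ) (κ : Tag n) (x : Var) (v : Val) :
      t < t' → (E (.proc i) t).wtag = some κ → E (.disp i) t' = .prop x v κ →
      ObBase E (.proc i, t) (.disp i, t')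
  | memAcc (b c : Agent n) (t t' : ℕ) (x : Var) :
      t < t' → (E b t).memVar = some x → (E c t').memVar = some x →
      ¬((E b t).isRfM ∧ (E c t').isRfM) →
      (∀ i : Fin n, ¬(b = .disp i ∧ c = .proc i ∧ (E b t).isProp ∧ (E c t').isRfM)) →
      ObBase E (b, t) (c, t')
  | sync (i : Fin n) (t t' : ℕ) :
      t < t' → (E (.disp i) t).isProp →
      (E (.proc i) t' = .fence ∨ (E (.proc i) t').isRMW) →
      ObBase E (.disp i, t) (.proc i, t')

/-- The occurs-before relation: the least relation containing the base cases
and closed under transitivity. -/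
def Ob {n : ℕ} {Var Val Op Resp : Type}
    (E : Agent n → ℕ → Event n Var Val Op Resp) : Node n → Node n → Prop :=
  Relation.TransGen (ObBase E)

/-- `Past_r(S)`: all nodes occurring before some node of `S`. -/
def Past {n : ℕ} {Var Val Op Resp : Type}
    (E : Agent n → ℕ → Event n Var Val Op Resp) (S : Set (Node n)) : Set (Node n) :=
  {θ | ∃ θ' ∈ S, Ob E θ θ'}

/-- `Past⁺_r(S) = Past_r(S) ∪ S`. -/
def PastPlus {n : ℕ} {Var Val Op Resp : Type}
    (E : Agent n → ℕ → Event n Var Val Op Resp) (S : Set (Node n)) : Set (Node n) :=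
  Past E S ∪ S

/-- Records kept in the local state of a process. -/
inductive Rec (Var Val Op Resp : Type) where
  | write (x : Var) (v : Val)
  | read (x : Var) (v : Val)
  | fence
  | rmw (x : Var) (vexp vnew : Val)
  | invoke (o : Op)
  | ret (o : Op) (res : Resp)

/-- A global TSO state: the shared memory (each variable holding a value and,
as bookkeeping, the tag of the write that produced it, if any), the store
buffers, the local states, and a per-process count of writes so far. -/
structure GState (n : ℕ) (Var Val Op Resp : Type) where
  mem : Var → Val × Option (Tag n)
  buf : Fin n → List (Var × Val × Tag n)
  loc : Fin n → List (Rec Var Val Op Resp)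
  wcount : Fin n → ℕ

/-- Actions a process can choose to perform. -/
inductive PAct (Var Val Op Resp : Type) where
  | write (x : Var) (v : Val)
  | read (x : Var)
  | fence
  | rmw (x : Var) (vexp vnew : Val)
  | ret (o : Op) (res : Resp)
  | nul

/-- Whether a process action is enabled in a given global state. -/
def PAct.enabled {n : ℕ} {Var Val Op Resp : Type}
    (σ : GState n Var Val Op Resp) (i : Fin n) : PAct Var Val Op Resp → Prop
  | .fence => σ.buf i = []
  | .rmw x vexp _ => σ.buf i = [] ∧ (σ.mem x).1 = vexp
  | _ => True

/-- Effect of a process action on the global state, together with the event it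
generates; `none` if the action is not enabled. -/
def applyP {n : ℕ} {Var Val Op Resp : Type} [DecidableEq Var] [DecidableEq Val]
    (σ : GState n Var Val Op Resp) (i : Fin n) :
    PAct Var Val Op Resp → Option (GState n Var Val Op Resp × Event n Var Val Op Resp)
  | .write x v =>
      some ({ σ with
          buf := Function.update σ.buf i (σ.buf i ++ [(x, v, (i, σ.wcount i + 1))])
          loc := Function.update σ.loc i (σ.loc i ++ [Rec.write x v])
          wcount := Function.update σ.wcount i (σ.wcount i + 1) },
        Event.write x v (i, σ.wcount i + 1))
  | .read x =>
      match ((σ.buf i).filter (fun e => decide (e.1 = x))).getLast? with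
      | some (_, v, κ) =>
          some ({ σ with loc := Function.update σ.loc i (σ.loc i ++ [Rec.read x v]) },
            Event.rfb x v κ)
      | none =>
          some ({ σ with loc := Function.update σ.loc i (σ.loc i ++ [Rec.read x (σ.mem x).1]) },
            Event.rfm x (σ.mem x).1 (σ.mem x).2)
  | .fence =>
      if σ.buf i = [] then
        some ({ σ with loc := Function.update σ.loc i (σ.loc i ++ [Rec.fence]) }, Event.fence)
      else none
  | .rmw x vexp vnew =>
      if σ.buf i = [] ∧ (σ.mem x).1 = vexp then
        some ({ σ with
            mem := Function.update σ.mem x (vnew, none)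
            loc := Function.update σ.loc i (σ.loc i ++ [Rec.rmw x vexp vnew]) },
          Event.rmw x vexp vnew)
      else none
  | .ret o res =>
      some ({ σ with loc := Function.update σ.loc i (σ.loc i ++ [Rec.ret o res]) },
        Event.ret o res)
  | .nul => some (σ, Event.nul)

/-- Effect of a propagate action by dispatcher `d_i`: pops the oldest buffer
item and writes it to memory; `none` if the buffer is empty. -/
def applyD {n : ℕ} {Var Val Op Resp : Type} [DecidableEq Var]
    (σ : GState n Var Val Op Resp) (i : Fin n) :
    Option (GState n Var Val Op Resp × Event n Var Val Op Resp) :=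
  match σ.buf i with
  | [] => none
  | (x, v, κ) :: rest =>
      some ({ σ with
          mem := Function.update σ.mem x (v, some κ)
          buf := Function.update σ.buf i rest },
        Event.prop x v κ)

/-- A joint action: one action per process, a choice of which dispatchers
propagate, and the environment's invocations (at most one per process). -/
structure JAct (n : ℕ) (Var Val Op Resp : Type) where
  pact : Fin n → PAct Var Val Op Resp
  dact : Fin n → Bool
  inv : Fin n → Option Op

/-- The processes followed by the dispatchers, in index order: the order in
which the components of a joint action are performed. -/
def agentsList (n : ℕ) : List (Agent n) :=
  ((List.finRange n).map Agent.proc) ++ ((List.finRange n).map Agent.disp)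

def roundStep {n : ℕ} {Var Val Op Resp : Type} [DecidableEq Var] [DecidableEq Val]
    (ja : JAct n Var Val Op Resp)
    (acc : GState n Var Val Op Resp × (Agent n → Event n Var Val Op Resp))
    (a : Agent n) :
    Option (GState n Var Val Op Resp × (Agent n → Event n Var Val Op Resp)) :=
  match a with
  | .proc i =>
      (applyP acc.1 i (ja.pact i)).map (fun p => (p.1, Function.update acc.2 (Agent.proc i) p.2))
  | .disp i =>
      if ja.dact i then
        (applyD acc.1 i).map (fun p => (p.1, Function.update acc.2 (Agent.disp i) p.2))
      else some acc

/-- Record invocations by the environment in the local states. -/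
def applyInv {n : ℕ} {Var Val Op Resp : Type}
    (σ : GState n Var Val Op Resp) (inv : Fin n → Option Op) : GState n Var Val Op Resp :=
  { σ with loc := fun i => σ.loc i ++
      (match inv i with
       | some o => [Rec.invoke o]
       | none => []) }

/-- One round: perform the components of the joint action one by one in order,
then record invocations. Returns the new global state and the event performed
by each agent; `none` if some non-null component is not enabled. -/
def round {n : ℕ} {Var Val Op Resp : Type} [DecidableEq Var] [DecidableEq Val]
    (σ : GState n Var Val Op Resp) (ja : JAct n Var Val Op Resp) :
    Option (GState n Var Val Op Resp × (Agent n → Event n Var Val Op Resp)) :=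
  ((agentsList n).foldlM (roundStep ja) (σ, fun _ => Event.nul)).map
    (fun p => (applyInv p.1 ja.inv, p.2))

/-- The initial global state: given initial memory, empty buffers, empty local
states. -/
def initState (n : ℕ) {Var Val : Type} (Op Resp : Type) (minit : Var → Val) :
    GState n Var Val Op Resp :=
  { mem := fun x => (minit x, none), buf := fun _ => [], loc := fun _ => [], wcount := fun _ => 0 }

/-- A TSO run: an infinite sequence of global states, starting from the initial
state, where each round is produced by an enabled joint action, and no two
conflicting actions occur in the same joint action. `events t b` is the action
agent `b` performs at time `t` (i.e. in round `t+1`). -/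
structure Run (n : ℕ) (Var Val Op Resp : Type) [DecidableEq Var] [DecidableEq Val]
    (minit : Var → Val) where
  state : ℕ → GState n Var Val Op Resp
  jact : ℕ → JAct n Var Val Op Resp
  events : ℕ → Agent n → Event n Var Val Op Resp
  init : state 0 = initState n Op Resp minit
  step : ∀ t, round (state t) (jact t) = some (state (t + 1), events t)
  noConflict : ∀ t (a a' : Agent n), a ≠ a' → ¬ EvConflict a (events t a) a' (events t a')

namespace Run

variable {n : ℕ} {Var Val Op Resp : Type} [DecidableEq Var] [DecidableEq Val] {minit : Var → Val}

/-- The action performed by agent `b` at time `t` (in round `t+1`). -/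
def act (r : Run n Var Val Op Resp minit) : Agent n → ℕ → Event n Var Val Op Resp :=
  fun b t => r.events t b

/-- The occurs-before relation of the run. -/
def obR (r : Run n Var Val Op Resp minit) : Node n → Node n → Prop := Ob r.act

/-- The local state of process `j` at time `t`. -/
def loc (r : Run n Var Val Op Resp minit) (j : Fin n) (t : ℕ) : List (Rec Var Val Op Resp) :=
  (r.state t).loc j

/-- The environment invokes operation `o` at process `i` in round `t+1`. -/
def invokedAt (r : Run n Var Val Op Resp minit) (i : Fin n) (o : Op) (t : ℕ) : Prop :=
  (r.jact t).inv i = some o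

end Run

/-- Two runs are locally equivalent if every local state of every process that
appears in one of them also appears in the other. -/
def LocalEquiv {n : ℕ} {Var Val Op Resp : Type} [DecidableEq Var] [DecidableEq Val]
    {minit : Var → Val} (r r' : Run n Var Val Op Resp minit) : Prop :=
  ∀ (j : Fin n) (ℓ : List (Rec Var Val Op Resp)), (∃ t, r.loc j t = ℓ) ↔ (∃ t, r'.loc j t = ℓ)

/-- A protocol: a nondeterministic choice of a nonempty set of actions for each
process in each local state. -/
structure Protocol (n : ℕ) (Var Val Op Resp : Type) where
  acts : Fin n → List (Rec Var Val Op Resp) → Set (PAct Var Val Op Resp)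
  nonempty : ∀ i ℓ, (acts i ℓ).Nonempty

/-- A run follows a protocol if every non-null process action is prescribed by
the protocol in the current local state. -/
def Run.follows {n : ℕ} {Var Val Op Resp : Type} [DecidableEq Var] [DecidableEq Val]
    {minit : Var → Val} (r : Run n Var Val Op Resp minit)
    (P : Protocol n Var Val Op Resp) : Prop :=
  ∀ t i, (r.jact t).pact i ≠ PAct.nul → (r.jact t).pact i ∈ P.acts i (r.loc i t)

/-- An operation occurrence: operation `o` invoked at process `i` in round
`ts+1`, with the matching return, carrying response `res`, performed at time
`te`. -/
structure OpOcc (n : ℕ) (Op Resp : Type) where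
  i : Fin n
  o : Op
  res : Resp
  ts : ℕ
  te : ℕ

namespace Run

variable {n : ℕ} {Var Val Op Resp : Type} [DecidableEq Var] [DecidableEq Val] {minit : Var → Val}

/-- `X` is a (completed) operation occurrence of the run: invoked at `X.ts`,
matching return at `X.te`, with no other invocation or return at the process in
between. -/
def isOp (r : Run n Var Val Op Resp minit) (X : OpOcc n Op Resp) : Prop :=
  X.ts < X.te ∧
  r.invokedAt X.i X.o X.ts ∧
  r.act (Agent.proc X.i) X.te = Event.ret X.o X.res ∧
  (∀ t, X.ts < t → t < X.te →
    (r.jact t).inv X.i = none ∧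
    ∀ (o' : Op) (res' : Resp), r.act (Agent.proc X.i) t ≠ Event.ret o' res')

/-- Process `X.i` runs solo during `X`: the only agents taking actions between
`t_{X.s}` and `t_{X.e}` are `X.i` and its dispatcher. -/
def solo (r : Run n Var Val Op Resp minit) (X : OpOcc n Op Resp) : Prop :=
  ∀ b : Agent n, b ≠ Agent.proc X.i → b ≠ Agent.disp X.i →
    ∀ t, X.ts ≤ t → t ≤ X.te → r.act b t = Event.nul

/-- `X` runs in isolation: every other invocation either completes before `X`
starts or is issued after `X` ends. -/
def isolated (r : Run n Var Val Op Resp minit) (X : OpOcc n Op Resp) : Prop :=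
  ∀ (j : Fin n) (o : Op) (t : ℕ), r.invokedAt j o t → ¬(j = X.i ∧ o = X.o ∧ t = X.ts) →
    (∃ Y : OpOcc n Op Resp, r.isOp Y ∧ Y.i = j ∧ Y.o = o ∧ Y.ts = t ∧ Y.te < X.ts) ∨ X.te < t

/-- `X` contains a feedback loop: an occurs-before chain from `X.s` to `X.e`
through a node of an agent other than `X.i` and its dispatcher. -/
def hasFeedback (r : Run n Var Val Op Resp minit) (X : OpOcc n Op Resp) : Prop :=
  ∃ (b : Agent n) (t : ℕ), b ≠ Agent.proc X.i ∧ b ≠ Agent.disp X.i ∧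
    r.obR (Agent.proc X.i, X.ts) (b, t) ∧ r.obR (b, t) (Agent.proc X.i, X.te)

/-- `X` contains a fence or an RMW action. -/
def containsSync (r : Run n Var Val Op Resp minit) (X : OpOcc n Op Resp) : Prop :=
  ∃ t, X.ts ≤ t ∧ t ≤ X.te ∧
    (r.act (Agent.proc X.i) t = Event.fence ∨ (r.act (Agent.proc X.i) t).isRMW)

/-- Operation `o`, invoked at process `i` at time `ts`, is still pending at
time `t`. -/
def pendingAt (r : Run n Var Val Op Resp minit) (i : Fin n) (o : Op) (ts t : ℕ) : Prop :=
  r.invokedAt i o ts ∧ ts ≤ t ∧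
    ∀ te, ts < te → te ≤ t → ∀ res : Resp, r.act (Agent.proc i) te ≠ Event.ret o res

/-- From time `t` on, only process `i` and its dispatcher take actions. -/
def soloFrom (r : Run n Var Val Op Resp minit) (i : Fin n) (t : ℕ) : Prop :=
  ∀ b : Agent n, b ≠ Agent.proc i → b ≠ Agent.disp i → ∀ t', t ≤ t' → r.act b t' = Event.nul

/-- Fairness for process `i` from time `t` on: enabled propagations of `i`'s
buffer eventually occur, and whenever `i` has an enabled protocol action it
eventually moves. -/
def fairFrom (r : Run n Var Val Op Resp minit) (P : Protocol n Var Val Op Resp)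
    (i : Fin n) (t : ℕ) : Prop :=
  (∀ t', t ≤ t' → (r.state t').buf i ≠ [] →
    ∃ t'', t' ≤ t'' ∧ (r.act (Agent.disp i) t'').isProp) ∧
  (∀ t', t ≤ t' → (∃ a ∈ P.acts i (r.loc i t'), a.enabled (r.state t') i) →
    ∃ t'', t' ≤ t'' ∧ r.act (Agent.proc i) t'' ≠ Event.nul)

end Run

/-- Obstruction freedom: in every run of the protocol, a pending operation of a
process that, from some point on, runs alone with its dispatcher (under the
fairness conditions) eventually completes. -/
def ObstructionFree {n : ℕ} {Var Val Op Resp : Type} [DecidableEq Var] [DecidableEq Val]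
    (P : Protocol n Var Val Op Resp) (minit : Var → Val) : Prop :=
  ∀ (r : Run n Var Val Op Resp minit), r.follows P →
    ∀ (i : Fin n) (o : Op) (ts t : ℕ),
      r.pendingAt i o ts t → r.soloFrom i t → r.fairFrom P i t →
      ∃ (te : ℕ) (res : Resp), t < te ∧ r.act (Agent.proc i) te = Event.ret o res

/-- An abstract operation in a linearization: process, invocation, response,
and invocation time (identifying the invocation in the run). -/
structure LOp (n : ℕ) (Op Resp : Type) where
  i : Fin n
  o : Op
  res : Resp
  ts : ℕ

def OpOcc.toLOp {n : ℕ} {Op Resp : Type} (X : OpOcc n Op Resp) : LOp n Op Resp :=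
  ⟨X.i, X.o, X.res, X.ts⟩

/-- `(Os, lt)` is a linearization of run `r`: `lt` is a strict total order on
`Os`; `Os` contains all completed operations of `r` (with their actual
responses) and only operations invoked in `r` (pending ones being completed
with some response); and `lt` is consistent with the real-time precedence
order of `r`. -/
def IsLinearization {n : ℕ} {Var Val Op Resp : Type} [DecidableEq Var] [DecidableEq Val]
    {minit : Var → Val} (r : Run n Var Val Op Resp minit)
    (Os : Set (LOp n Op Resp)) (lt : LOp n Op Resp → LOp n Op Resp → Prop) : Prop :=
  (∀ Y ∈ Os, ¬ lt Y Y) ∧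
  (∀ Y₁ ∈ Os, ∀ Y₂ ∈ Os, ∀ Y₃ ∈ Os, lt Y₁ Y₂ → lt Y₂ Y₃ → lt Y₁ Y₃) ∧
  (∀ Y₁ ∈ Os, ∀ Y₂ ∈ Os, Y₁ ≠ Y₂ → lt Y₁ Y₂ ∨ lt Y₂ Y₁) ∧
  (∀ X : OpOcc n Op Resp, r.isOp X → X.toLOp ∈ Os) ∧
  (∀ Y ∈ Os, r.invokedAt Y.i Y.o Y.ts) ∧
  (∀ Y ∈ Os, ∀ X : OpOcc n Op Resp, r.isOp X →
    X.i = Y.i → X.o = Y.o → X.ts = Y.ts → X.res = Y.res) ∧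
  (∀ X : OpOcc n Op Resp, r.isOp X → ∀ Y ∈ Os, X.te < Y.ts → lt X.toLOp Y)

end TSO

namespace TSO

/-- `shift_Δ(t,k) = t` if `t ≤ k`, and `t + Δ` otherwise. -/
def shiftΔ (Δ t k : ℕ) : ℕ := if t ≤ k then t else t + Δ

/-!
Since `Past⁺_r(S)` is closed downwards under occurs-before, and in particular under locality,
its trace on the timeline of each agent `b` is the initial segment `{t | t < m̂_b}`. Occurs-before
strictly increases time, and an edge ending below the frontier `m̂` of its target's agent starts
below the frontier of its own agent, so no edge goes from a shifted node to an unshifted one.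
-/

lemma ObBase.time_lt {n : ℕ} {Var Val Op Resp : Type}
    {E : Agent n → ℕ → Event n Var Val Op Resp} {θ θ' : Node n}
    (h : ObBase E θ θ') : θ.2 < θ'.2 := by
  cases h <;> assumption

lemma Ob.time_lt {n : ℕ} {Var Val Op Resp : Type}
    {E : Agent n → ℕ → Event n Var Val Op Resp} {θ θ' : Node n}
    (h : Ob E θ θ') : θ.2 < θ'.2 :=
  Relation.TransGen.trans_induction_on h ObBase.time_lt fun _ _ => lt_trans

lemma mem_pastPlus_of_ob {n : ℕ} {Var Val Op Resp : Type}
    {E : Agent n → ℕ → Event n Var Val Op Resp} {S : Set (Node n)} {θ θ' : Node n}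
    (hob : Ob E θ θ') : θ' ∈ PastPlus E S → θ ∈ PastPlus E S
  | .inl ⟨ψ, hψ, hob'⟩ => .inl ⟨ψ, hψ, hob.trans hob'⟩
  | .inr h => .inl ⟨θ', h, hob⟩

lemma antitone_mem_pastPlus {n : ℕ} {Var Val Op Resp : Type}
    (E : Agent n → ℕ → Event n Var Val Op Resp) (S : Set (Node n)) (b : Agent n) :
    Antitone fun t => (b, t) ∈ PastPlus E S := fun t t' htt h => by
  rcases htt.lt_or_eq with htt | rfl
  · exact mem_pastPlus_of_ob (.single (.locality b t t' htt)) h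
  · exact h

lemma Antitone.iff_lt_of_frontier {P : ℕ → Prop} (hP : Antitone P) {m : ℕ}
    (hm : (m = 0 ∧ ¬P 0) ∨ (0 < m ∧ P (m - 1) ∧ ¬P m)) (t : ℕ) : P t ↔ t < m := by
  have hPm : ¬P m := by rcases hm with ⟨rfl, h⟩ | ⟨_, _, h⟩ <;> exact h
  refine ⟨fun ht => lt_of_not_ge fun hmt => hPm (hP hmt ht), fun ht => ?_⟩
  rcases hm with ⟨rfl, _⟩ | ⟨_, hPm1, _⟩
  · exact absurd ht (Nat.not_lt_zero t)
  · exact hP (Nat.le_sub_one_of_lt ht) hPm1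

lemma shiftΔ_lt_shiftΔ {Δ s₁ s₂ k₁ k₂ : ℕ} (hs : s₁ < s₂) (hk : s₂ ≤ k₂ → s₁ ≤ k₁) :
    shiftΔ Δ s₁ k₁ < shiftΔ Δ s₂ k₂ := by
  unfold shiftΔ
  split_ifs <;> omega

/-- the shift operator does not reorder nodes standing in the
occurs-before relation. Here `mhat b` is the time `m̂_b`: `0` if
`⟨b,0⟩ ∉ Past⁺_r(S)`, and otherwise the time `t > 0` with
`⟨b,t-1⟩ ∈ Past⁺_r(S)` and `⟨b,t⟩ ∉ Past⁺_r(S)`. -/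
theorem ob_shift_mono
    {n : ℕ} {Var Val Op Resp : Type} [DecidableEq Var] [DecidableEq Val]
    {minit : Var → Val} (r : Run n Var Val Op Resp minit)
    (S : Finset (Node n)) (Δ : ℕ) (mhat : Agent n → ℕ)
    (hm : ∀ b : Agent n,
      (mhat b = 0 ∧ (b, 0) ∉ PastPlus r.act ↑S) ∨
      (0 < mhat b ∧ (b, mhat b - 1) ∈ PastPlus r.act ↑S ∧ (b, mhat b) ∉ PastPlus r.act ↑S))
    (b₁ b₂ : Agent n) (t₁ t₂ : ℕ)
    (h : r.obR (b₁, t₁) (b₂, t₂)) :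
    shiftΔ Δ (t₁ + 1) (mhat b₁) < shiftΔ Δ (t₂ + 1) (mhat b₂) := by
  have hpast (b : Agent n) : ∀ t, (b, t) ∈ PastPlus r.act ↑S ↔ t < mhat b :=
    Antitone.iff_lt_of_frontier (antitone_mem_pastPlus r.act _ b) (hm b)
  refine shiftΔ_lt_shiftΔ (Nat.succ_lt_succ (Ob.time_lt h)) fun h₂ => ?_
  exact (hpast b₁ t₁).1 (mem_pastPlus_of_ob h ((hpast b₂ t₂).2 h₂))

end TSO
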